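/- arXiv:1107.3690 — 2 statements merged into one kernel-verified Lean document; each statement's English description precedes it below -/
import Mathlib

section
/- The incidence graph of the geometry with points the 2-element subsets of {1,...,6} and lines the perfect matchings of {1,...,6} has girth 8. -/
open scoped Classical

/-- A point: a 2-element subset of {1,...,6}. -/
def IsPointW2 (p : Finset (Fin 6)) : Prop := p.card = 2

/-- A line: a perfect matching of {1,...,6}. -/
def IsLineW2 (L : Finset (Finset (Fin 6))) : Prop :=
  L.card = 3 ∧ (∀ p ∈ L, p.card = 2) ∧ (∀ p ∈ L, ∀ q ∈ L, p ≠ q → Disjoint p q) ∧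
    (∀ i : Fin 6, ∃ p ∈ L, i ∈ p)

/-- Vertices of the incidence graph: points on the left, lines on the right. -/
abbrev VW2 := {p : Finset (Fin 6) // IsPointW2 p} ⊕ {L : Finset (Finset (Fin 6)) // IsLineW2 L}

/-- The incidence graph: a point-vertex and a line-vertex are adjacent iff the point belongs
to the line. -/
noncomputable def IncGraphW2 : SimpleGraph VW2 :=
  SimpleGraph.fromRel (fun x y =>
    match x, y with
    | Sum.inl p, Sum.inr L => p.1 ∈ L.1
    | _, _ => False)

/-!
The incidence graph is bipartite, so its cycles have even length. A 4-cycle would put two points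
on two lines; but two disjoint pairs `p, q` of `{1, …, 6}` lie on exactly one perfect matching,
namely `{p, q, (p ∪ q)ᶜ}`. A 6-cycle would be a triangle: points `p, q, r` that are pairwise
collinear, hence pairwise disjoint. Then `r = (p ∪ q)ᶜ`, so `r` lies on the line through `p` and
`q`, and two sides of the triangle coincide. Finally, an explicit octagon shows that the girth is
attained.
-/

namespace SimpleGraph

open Function

variable {V : Type*} {G : SimpleGraph V}

lemma Copy.adj_add_one {n : ℕ} (f : Copy (cycleGraph (n + 2)) G) (i : Fin (n + 2)) :
    G.Adj (f i) (f (i + 1)) :=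
  f.toHom.map_adj (cycleGraph_adj.mpr (Or.inr (by simp)))

lemma cycleGraph_isContained_of_adj_add_one {n : ℕ} (f : Fin (n + 2) → V) (hf : Injective f)
    (hadj : ∀ i, G.Adj (f i) (f (i + 1))) : cycleGraph (n + 2) ⊑ G := by
  refine ⟨⟨⟨f, fun {i j} hij => ?_⟩, hf⟩⟩
  rcases cycleGraph_adj.mp hij with h | h
  · rw [sub_eq_iff_eq_add.mp h, add_comm]
    exact (hadj j).symm
  · rw [sub_eq_iff_eq_add.mp h, add_comm]
    exact hadj i

lemma egirth_le_of_cycleGraph_isContained {n : ℕ} (hn : 2 < n) (h : cycleGraph n ⊑ G) :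
    G.egirth ≤ n := by
  obtain ⟨a, w, hw, rfl⟩ := (cycleGraph_isContained_iff hn).mp h
  exact egirth_le_length hw

lemma IsBipartite.le_egirth {n : ℕ} (hG : G.IsBipartite)
    (h : ∀ m, 3 ≤ m → m < n → Even m → (cycleGraph m).Free G) : n ≤ G.egirth := by
  refine SimpleGraph.le_egirth.mpr fun a w hw => ?_
  by_contra! hlt
  exact h w.length hw.three_le_length (by exact_mod_cast hlt)
    (two_colorable_iff_forall_loop_even.mp hG a w)
    ((cycleGraph_isContained_iff hw.three_le_length).mpr ⟨a, w, hw, rfl⟩)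

end SimpleGraph

lemma eq_compl_union_of_disjoint {p q r : Finset (Fin 6)} (hp : p.card = 2) (hq : q.card = 2)
    (hr : r.card = 2) (hpq : Disjoint p q) (hpr : Disjoint p r) (hqr : Disjoint q r) :
    r = (p ∪ q)ᶜ := by
  refine Finset.eq_of_subset_of_card_le ?_ ?_
  · rw [Finset.subset_compl_iff_disjoint_left]
    exact Finset.disjoint_union_left.mpr ⟨hpr, hqr⟩
  · rw [Finset.card_compl, Finset.card_union_of_disjoint hpq, hp, hq, hr, Fintype.card_fin]

lemma isLineW2_insert_compl_union {p q : Finset (Fin 6)} (hp : p.card = 2) (hq : q.card = 2)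
    (hpq : Disjoint p q) : IsLineW2 {p, q, (p ∪ q)ᶜ} := by
  set r := (p ∪ q)ᶜ
  have hr : r.card = 2 := by
    rw [Finset.card_compl, Finset.card_union_of_disjoint hpq, hp, hq, Fintype.card_fin]
  have hpr : Disjoint p r := Finset.disjoint_right.mpr fun _ hx hxp => by simp_all [r]
  have hqr : Disjoint q r := Finset.disjoint_right.mpr fun _ hx hxq => by simp_all [r]
  have hne {s t : Finset (Fin 6)} (hs : s.card = 2) (hst : Disjoint s t) : s ≠ t := by
    rintro rfl
    simp_all
  refine ⟨Finset.card_eq_three.mpr ⟨p, q, r, hne hp hpq, hne hp hpr, hne hq hqr, rfl⟩, ?_, ?_, ?_⟩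
  · simp [hp, hq, hr]
  · simp only [Finset.mem_insert, Finset.mem_singleton]
    rintro s (rfl | rfl | rfl) t (rfl | rfl | rfl) hst <;>
      first | exact absurd rfl hst | assumption | exact Disjoint.symm ‹_›
  · intro i
    by_cases hi : i ∈ p ∪ q
    · rcases Finset.mem_union.mp hi with h | h
      exacts [⟨p, by simp, h⟩, ⟨q, by simp, h⟩]
    · exact ⟨r, by simp, Finset.mem_compl.mpr hi⟩

namespace IsLineW2

variable {L M N : Finset (Finset (Fin 6))} {p q r : Finset (Fin 6)}

lemma card_eq_two (hL : IsLineW2 L) (hp : p ∈ L) : p.card = 2 := hL.2.1 p hp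

lemma disjoint (hL : IsLineW2 L) (hp : p ∈ L) (hq : q ∈ L) (hpq : p ≠ q) : Disjoint p q :=
  hL.2.2.1 p hp q hq hpq

lemma eq_insert_compl_union (hL : IsLineW2 L) (hp : p ∈ L) (hq : q ∈ L) (hpq : p ≠ q) :
    L = {p, q, (p ∪ q)ᶜ} := by
  have hsub : L ⊆ {p, q, (p ∪ q)ᶜ} := by
    intro r hr
    simp only [Finset.mem_insert, Finset.mem_singleton]
    by_cases hrp : r = p; · exact Or.inl hrp
    by_cases hrq : r = q; · exact Or.inr (Or.inl hrq)
    exact Or.inr <| Or.inr <| eq_compl_union_of_disjoint (hL.card_eq_two hp) (hL.card_eq_two hq)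
      (hL.card_eq_two hr) (hL.disjoint hp hq hpq) (hL.disjoint hp hr (Ne.symm hrp))
      (hL.disjoint hq hr (Ne.symm hrq))
  exact Finset.eq_of_subset_of_card_le hsub (hL.1 ▸ Finset.card_le_three)

lemma compl_union_mem (hL : IsLineW2 L) (hp : p ∈ L) (hq : q ∈ L) (hpq : p ≠ q) :
    (p ∪ q)ᶜ ∈ L := by
  rw [hL.eq_insert_compl_union hp hq hpq]
  simp

lemma eq_of_mem_of_mem (hL : IsLineW2 L) (hM : IsLineW2 M) (hpq : p ≠ q) (hpL : p ∈ L)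
    (hqL : q ∈ L) (hpM : p ∈ M) (hqM : q ∈ M) : L = M := by
  rw [hL.eq_insert_compl_union hpL hqL hpq, hM.eq_insert_compl_union hpM hqM hpq]

lemma eq_of_triangle (hL : IsLineW2 L) (hM : IsLineW2 M) (hN : IsLineW2 N) (hpq : p ≠ q)
    (hqr : q ≠ r) (hrp : r ≠ p) (hpL : p ∈ L) (hqL : q ∈ L) (hqM : q ∈ M) (hrM : r ∈ M)
    (hrN : r ∈ N) (hpN : p ∈ N) : L = M := by
  have hr : r = (p ∪ q)ᶜ := eq_compl_union_of_disjoint (hL.card_eq_two hpL) (hL.card_eq_two hqL)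
    (hM.card_eq_two hrM) (hL.disjoint hpL hqL hpq) (hN.disjoint hpN hrN hrp.symm)
    (hM.disjoint hqM hrM hqr)
  exact hL.eq_of_mem_of_mem hM hqr hqL (hr ▸ hL.compl_union_mem hpL hqL hpq) hqM hrM

end IsLineW2

namespace IncGraphW2

open SimpleGraph Function

variable {p : {p : Finset (Fin 6) // IsPointW2 p}} {L : {L : Finset (Finset (Fin 6)) // IsLineW2 L}}
  {y : VW2}

@[simp]
lemma adj_inl_inr : IncGraphW2.Adj (.inl p) (.inr L) ↔ p.1 ∈ L.1 := by
  simp [IncGraphW2]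

@[simp]
lemma adj_inr_inl : IncGraphW2.Adj (.inr L) (.inl p) ↔ p.1 ∈ L.1 := by
  simp [IncGraphW2]

@[simp]
lemma not_adj_inl_inl {q} : ¬IncGraphW2.Adj (.inl p) (.inl q) := by
  simp [IncGraphW2]

@[simp]
lemma not_adj_inr_inr {M} : ¬IncGraphW2.Adj (.inr L) (.inr M) := by
  simp [IncGraphW2]

lemma exists_eq_inr_of_adj (h : IncGraphW2.Adj (.inl p) y) : ∃ L, y = .inr L ∧ p.1 ∈ L.1 := by
  rcases y with _ | L
  · simp at h
  · exact ⟨L, rfl, adj_inl_inr.mp h⟩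

lemma exists_eq_inl_of_adj (h : IncGraphW2.Adj (.inr L) y) : ∃ p, y = .inl p ∧ p.1 ∈ L.1 := by
  rcases y with p | _
  · exact ⟨p, rfl, adj_inr_inl.mp h⟩
  · simp at h

lemma isBipartite : IncGraphW2.IsBipartite :=
  IsBipartiteWith.isBipartite (s := Set.range Sum.inl) (t := Set.range Sum.inr)
    { disjoint := Set.disjoint_range_iff.mpr fun _ _ => Sum.inl_ne_inr
      mem_of_adj := by
        rintro (p | L) (q | M) h <;> simp_all }

lemma eq_of_adj_of_adj {u v a b : VW2} (hua : IncGraphW2.Adj u a) (hub : IncGraphW2.Adj u b)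
    (hva : IncGraphW2.Adj v a) (hvb : IncGraphW2.Adj v b) (hab : a ≠ b) : u = v := by
  rcases u with p | L
  · obtain ⟨L, rfl, hpL⟩ := exists_eq_inr_of_adj hua
    obtain ⟨M, rfl, hpM⟩ := exists_eq_inr_of_adj hub
    obtain ⟨q, rfl, hqL⟩ := exists_eq_inl_of_adj hva.symm
    have hqM : q.1 ∈ M.1 := adj_inl_inr.mp hvb
    by_contra hpq
    exact hab <| congrArg Sum.inr <| Subtype.ext <|
      L.2.eq_of_mem_of_mem M.2 (fun h => hpq (by rw [Subtype.ext h])) hpL hqL hpM hqM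
  · obtain ⟨p, rfl, hpL⟩ := exists_eq_inl_of_adj hua
    obtain ⟨q, rfl, hqL⟩ := exists_eq_inl_of_adj hub
    obtain ⟨M, rfl, hpM⟩ := exists_eq_inr_of_adj hva.symm
    have hqM : q.1 ∈ M.1 := adj_inr_inl.mp hvb
    exact congrArg Sum.inr <| Subtype.ext <|
      L.2.eq_of_mem_of_mem M.2 (fun h => hab (by rw [Subtype.ext h])) hpL hqL hpM hqM

lemma not_hexagon_of_inl (v : Fin 6 → VW2) (hv : Injective v)
    (hadj : ∀ i, IncGraphW2.Adj (v i) (v (i + 1))) (h0 : v 0 = .inl p) : False := by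
  have a01 : IncGraphW2.Adj (v 0) (v 1) := hadj 0
  have a12 : IncGraphW2.Adj (v 1) (v 2) := hadj 1
  have a23 : IncGraphW2.Adj (v 2) (v 3) := hadj 2
  have a34 : IncGraphW2.Adj (v 3) (v 4) := hadj 3
  have a45 : IncGraphW2.Adj (v 4) (v 5) := hadj 4
  have a50 : IncGraphW2.Adj (v 5) (v 0) := hadj 5
  rw [h0] at a01 a50
  obtain ⟨L, h1, hpL⟩ := exists_eq_inr_of_adj a01
  rw [h1] at a12
  obtain ⟨q, h2, hqL⟩ := exists_eq_inl_of_adj a12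
  rw [h2] at a23
  obtain ⟨M, h3, hqM⟩ := exists_eq_inr_of_adj a23
  rw [h3] at a34
  obtain ⟨r, h4, hrM⟩ := exists_eq_inl_of_adj a34
  rw [h4] at a45
  obtain ⟨N, h5, hrN⟩ := exists_eq_inr_of_adj a45
  rw [h5] at a50
  have hpN : p.1 ∈ N.1 := adj_inr_inl.mp a50
  have hne {i j : Fin 6} {x y : VW2} (hij : i ≠ j) (hi : v i = x) (hj : v j = y) : x ≠ y :=
    hi ▸ hj ▸ hv.ne hij
  have hLM : L.1 = M.1 := L.2.eq_of_triangle M.2 N.2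
    (fun h => hne (by decide : (0 : Fin 6) ≠ 2) h0 h2 (by rw [Subtype.ext h]))
    (fun h => hne (by decide : (2 : Fin 6) ≠ 4) h2 h4 (by rw [Subtype.ext h]))
    (fun h => hne (by decide : (4 : Fin 6) ≠ 0) h4 h0 (by rw [Subtype.ext h]))
    hpL hqL hqM hrM hrN hpN
  exact hne (by decide : (1 : Fin 6) ≠ 3) h1 h3 (by rw [Subtype.ext hLM])

lemma not_hexagon (v : Fin 6 → VW2) (hv : Injective v)
    (hadj : ∀ i, IncGraphW2.Adj (v i) (v (i + 1))) : False := by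
  rcases h0 : v 0 with p | L
  · exact not_hexagon_of_inl v hv hadj h0
  · obtain ⟨p, h1, -⟩ := exists_eq_inl_of_adj (h0 ▸ hadj 0)
    refine not_hexagon_of_inl (v ∘ (· + 1)) (hv.comp (add_left_injective 1)) (fun i => ?_) h1
    simpa only [comp_apply, add_assoc] using hadj (i + 1)

lemma free_cycleGraph_four : (cycleGraph 4).Free IncGraphW2 := by
  rintro ⟨f⟩
  exact f.injective.ne (by decide : (0 : Fin 4) ≠ 2) <| eq_of_adj_of_adj (f.adj_add_one 0)
    (f.adj_add_one 3).symm (f.adj_add_one 1).symm (f.adj_add_one 2) (f.injective.ne (by decide))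

lemma free_cycleGraph_six : (cycleGraph 6).Free IncGraphW2 := by
  rintro ⟨f⟩
  exact not_hexagon f f.injective f.adj_add_one

def point (p : Finset (Fin 6)) (hp : p.card = 2 := by decide) : VW2 := .inl ⟨p, hp⟩

def lineThrough (p q : Finset (Fin 6)) (hp : p.card = 2 := by decide)
    (hq : q.card = 2 := by decide) (hpq : Disjoint p q := by decide) : VW2 :=
  .inr ⟨{p, q, (p ∪ q)ᶜ}, isLineW2_insert_compl_union hp hq hpq⟩

def octagon : Fin 8 → VW2 :=
  ![point {0, 1}, lineThrough {0, 1} {2, 3}, point {2, 3}, lineThrough {2, 3} {0, 5},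
    point {0, 5}, lineThrough {0, 5} {2, 4}, point {2, 4}, lineThrough {2, 4} {0, 1}]

lemma cycleGraph_eight_isContained : cycleGraph 8 ⊑ IncGraphW2 :=
  cycleGraph_isContained_of_adj_add_one octagon (by decide) fun i => by
    fin_cases i <;> simp [octagon, point, lineThrough]

end IncGraphW2

/-- The incidence graph of W(2) has girth 8. -/
theorem IncGraphW2_girth_eight : IncGraphW2.egirth = 8 := by
  refine le_antisymm ?_ ?_
  · exact_mod_cast SimpleGraph.egirth_le_of_cycleGraph_isContained (by norm_num)
      IncGraphW2.cycleGraph_eight_isContained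
  · refine IncGraphW2.isBipartite.le_egirth fun m h3 h8 heven => ?_
    interval_cases m
    · exact absurd heven (by decide)
    · exact IncGraphW2.free_cycleGraph_four
    · exact absurd heven (by decide)
    · exact IncGraphW2.free_cycleGraph_six
    · exact absurd heven (by decide)
end

section
/- In the geometry with points the 2-element subsets of {1,...,6} and lines the perfect matchings of {1,...,6}, for every point p and every line L not containing p, there is exactly one point q on L that is collinear with p. -/
/-- Two points are collinear if some line contains both. -/
def CollinearW2 (p q : Finset (Fin 6)) : Prop :=
  ∃ M : Finset (Finset (Fin 6)), IsLineW2 M ∧ p ∈ M ∧ q ∈ M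

lemma ne_of_disjoint_card {s t : Finset (Fin 6)} (hs : s.card = 2) (h : Disjoint s t) :
    s ≠ t := by
  rintro rfl
  rw [Finset.disjoint_self_iff_empty] at h
  simp [h] at hs

lemma collinear_of_disjoint {p q : Finset (Fin 6)} (hp : p.card = 2) (hq : q.card = 2)
    (h : Disjoint p q) : CollinearW2 p q := by
  set r : Finset (Fin 6) := (p ∪ q)ᶜ with hr
  have hrcard : r.card = 2 := by
    rw [hr, Finset.card_compl, Finset.card_union_of_disjoint h, hp, hq]
    rfl
  have hrp : Disjoint r p := by
    rw [Finset.disjoint_left]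
    intro i hi hip
    rw [hr, Finset.mem_compl, Finset.mem_union] at hi
    exact hi (Or.inl hip)
  have hrq : Disjoint r q := by
    rw [Finset.disjoint_left]
    intro i hi hiq
    rw [hr, Finset.mem_compl, Finset.mem_union] at hi
    exact hi (Or.inr hiq)
  have hpq : p ≠ q := ne_of_disjoint_card hp h
  have hrpne : r ≠ p := ne_of_disjoint_card hrcard hrp
  have hrqne : r ≠ q := ne_of_disjoint_card hrcard hrq
  refine ⟨{p, q, r}, ⟨?_, ?_, ?_, ?_⟩, by simp, by simp⟩
  · rw [Finset.card_insert_of_notMem (by simp [hpq, hrpne.symm]),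
      Finset.card_insert_of_notMem (by simp [hrqne.symm]), Finset.card_singleton]
  · intro s hs
    simp only [Finset.mem_insert, Finset.mem_singleton] at hs
    rcases hs with rfl | rfl | rfl <;> assumption
  · intro s hs t ht hst
    simp only [Finset.mem_insert, Finset.mem_singleton] at hs ht
    rcases hs with rfl | rfl | rfl <;> rcases ht with rfl | rfl | rfl <;>
      first
        | exact absurd rfl hst
        | assumption
        | exact h.symm
        | exact hrp.symm
        | exact hrq.symm
  · intro i
    by_cases hip : i ∈ p
    · exact ⟨p, by simp, hip⟩
    by_cases hiq : i ∈ q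
    · exact ⟨q, by simp, hiq⟩
    exact ⟨r, by simp, by rw [hr]; simp [hip, hiq]⟩

lemma eq_or_disjoint_of_collinear {p q : Finset (Fin 6)} (h : CollinearW2 p q) :
    p = q ∨ Disjoint p q := by
  obtain ⟨M, ⟨-, -, hd, -⟩, hpM, hqM⟩ := h
  by_cases hpq : p = q
  · exact Or.inl hpq
  · exact Or.inr (hd p hpM q hqM hpq)

/-- The generalized quadrangle axiom for W(2) = GQ(2,2): for every point p and every line L not
containing p there is exactly one point q on L collinear with p. -/
theorem W2_GQ_axiom (p : Finset (Fin 6)) (hp : IsPointW2 p)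
    (L : Finset (Finset (Fin 6))) (hL : IsLineW2 L) (hpL : p ∉ L) :
    ∃! q : Finset (Fin 6), q ∈ L ∧ CollinearW2 p q := by
  obtain ⟨hc3, hcard2, hdisj, hcover⟩ := hL
  obtain ⟨x, y, hxy, rfl⟩ := Finset.card_eq_two.mp hp
  obtain ⟨a, haL, hxa⟩ := hcover x
  obtain ⟨b, hbL, hyb⟩ := hcover y
  have hab : a ≠ b := by
    rintro rfl
    apply hpL
    have hsub : ({x, y} : Finset (Fin 6)) ⊆ a := by
      intro i hi
      simp only [Finset.mem_insert, Finset.mem_singleton] at hi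
      rcases hi with rfl | rfl <;> assumption
    have : ({x, y} : Finset (Fin 6)) = a :=
      Finset.eq_of_subset_of_card_le hsub (by rw [hcard2 a haL, hp])
    rwa [this]
  have hex : ∃ q ∈ L, q ≠ a ∧ q ≠ b := by
    by_contra hcon
    push_neg at hcon
    have hsub : L ⊆ {a, b} := by
      intro q hq
      rcases Classical.em (q = a) with rfl | h1
      · simp
      · simp [hcon q hq h1]
    have := Finset.card_le_card hsub
    rw [hc3] at this
    have : ({a, b} : Finset (Finset (Fin 6))).card ≤ 2 := Finset.card_insert_le _ _ |>.trans (by simp)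
    omega
  obtain ⟨q, hqL, hqa, hqb⟩ := hex
  have hxq : x ∉ q := fun h => Finset.disjoint_left.mp (hdisj q hqL a haL hqa) h hxa
  have hyq : y ∉ q := fun h => Finset.disjoint_left.mp (hdisj q hqL b hbL hqb) h hyb
  have hdpq : Disjoint {x, y} q := by
    rw [Finset.disjoint_left]
    intro i hi
    simp only [Finset.mem_insert, Finset.mem_singleton] at hi
    rcases hi with rfl | rfl <;> assumption
  refine ⟨q, ⟨hqL, collinear_of_disjoint hp (hcard2 q hqL) hdpq⟩, ?_⟩
  rintro q' ⟨hq'L, hcol⟩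
  have hdis : Disjoint ({x, y} : Finset (Fin 6)) q' := by
    rcases eq_or_disjoint_of_collinear hcol with rfl | h
    · exact absurd hq'L hpL
    · exact h
  have hq'a : q' ≠ a := fun h => Finset.disjoint_left.mp hdis (by simp) (h ▸ hxa)
  have hq'b : q' ≠ b := fun h => Finset.disjoint_left.mp hdis (by simp) (h ▸ hyb)
  have hLeq : ({a, b, q} : Finset (Finset (Fin 6))) = L := by
    apply Finset.eq_of_subset_of_card_le
    · intro s hs
      simp only [Finset.mem_insert, Finset.mem_singleton] at hs
      rcases hs with rfl | rfl | rfl <;> assumption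
    · rw [hc3, Finset.card_insert_of_notMem (by simp [hab, Ne.symm hqa]),
        Finset.card_insert_of_notMem (by simp [Ne.symm hqb]), Finset.card_singleton]
  rw [← hLeq] at hq'L
  simp only [Finset.mem_insert, Finset.mem_singleton] at hq'L
  rcases hq'L with rfl | rfl | rfl
  · exact absurd rfl hq'a
  · exact absurd rfl hq'b
  · rfl
end
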